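/- Let Fₕ and Fₗ be monotone predicate transformers on P(Sₕ) and P(Sₗ), and let R ⊆ Sₕ × Sₗ be a relation such that ⟨R⁻¹⟩ ∘ Fₕ ⊆ (Fₗ)* ∘ ⟨R⁻¹⟩ (R is a general simulation). Define the saturation R̄ by (sₕ,sₗ) ∈ R̄ iff sₗ ∈ (Fₗ)*(⟨R⁻¹⟩({sₕ})). Then R̄ is also a general simulation of Fₕ by Fₗ, i.e., ⟨R̄⁻¹⟩ ∘ Fₕ ⊆ (Fₗ)* ∘ ⟨R̄⁻¹⟩. -/
import Mathlib


def star {S : Type*} (F : Set S → Set S) (U : Set S) : Set S :=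
  sInf {X | U ∪ F X ⊆ X}

def img {Sh Sl : Type*} (R : Set (Sh × Sl)) (U : Set Sh) : Set Sl :=
  {sl | ∃ sh ∈ U, (sh, sl) ∈ R}

/-- Saturation of a relation `R` with respect to `Fl`. -/
def sat {Sh Sl : Type*} (Fl : Set Sl → Set Sl) (R : Set (Sh × Sl)) : Set (Sh × Sl) :=
  {p | p.2 ∈ star Fl (img R {p.1})}

lemma star_le {S : Type*} {F : Set S → Set S} {U X : Set S}
    (h : U ∪ F X ⊆ X) : star F U ⊆ X :=
  sInf_le h

lemma subset_star {S : Type*} {F : Set S → Set S} {U : Set S} : U ⊆ star F U :=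
  fun _ hx => Set.mem_sInter.2 fun _ hX => hX (Or.inl hx)

lemma star_mono {S : Type*} {F : Set S → Set S} {U V : Set S}
    (h : U ⊆ V) : star F U ⊆ star F V := by
  intro x hx
  exact Set.mem_sInter.2 fun X hX => Set.mem_sInter.1 hx X
    (Set.union_subset (h.trans (Set.union_subset_iff.mp hX).1)
      (Set.union_subset_iff.mp hX).2)

lemma F_star_subset {S : Type*} {F : Set S → Set S} (hF : Monotone F) {U : Set S} :
    F (star F U) ⊆ star F U := by
  intro x hx
  refine Set.mem_sInter.2 fun X hX => ?_
  have h1 : star F U ⊆ X := sInf_le hX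
  exact (Set.union_subset_iff.mp hX).2 (hF h1 hx)

lemma myStarStar {S : Type*} {F : Set S → Set S} (hF : Monotone F) {U : Set S} :
    star F (star F U) ⊆ star F U :=
  star_le (Set.union_subset subset_rfl (F_star_subset hF))

theorem sat_general_simulation {Sh Sl : Type*}
    (Fh : Set Sh → Set Sh) (Fl : Set Sl → Set Sl)
    (hFh : Monotone Fh) (hFl : Monotone Fl) (R : Set (Sh × Sl))
    (hR : ∀ U : Set Sh, img R (Fh U) ⊆ star Fl (img R U)) :
    ∀ U : Set Sh, img (sat Fl R) (Fh U) ⊆ star Fl (img (sat Fl R) U) := by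
  intro U sl hsl
  obtain ⟨sh, hsh, hst⟩ := hsl
  have h1 : img R {sh} ⊆ img R (Fh U) := by
    rintro y ⟨z, hz, hzy⟩
    exact ⟨z, by simpa using hz ▸ hsh, hzy⟩
  have h2 : img R U ⊆ img (sat Fl R) U := by
    rintro y ⟨z, hz, hzy⟩
    exact ⟨z, hz, subset_star ⟨z, rfl, hzy⟩⟩
  have : star Fl (img R {sh}) ⊆ star Fl (img (sat Fl R) U) :=
    (star_mono h1).trans ((star_mono (hR U)).trans
      ((myStarStar hFl).trans (star_mono h2)))
  exact this hst
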